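/- S_R(ℝ^{2n}) is closed under the canonical Poisson bracket: for all f, g ∈ S_R(ℝ^{2n}) (which are smooth functions, being finite sums of compositions of Schwartz functions with orthogonal projections), the function {f, g} : ℝ^{2n} → ℂ defined by {f, g}(z) = Σ_{j=1}^n (∂_j f(z) · ∂_{n+j} g(z) − ∂_{n+j} f(z) · ∂_j g(z)), where ∂_k denotes the partial derivative in the k-th coordinate direction, again belongs to S_R(ℝ^{2n}). -/

import Mathlib

open Filter Topology
open scoped BoundedContinuousFunction InnerProductSpace

noncomputable section

/-- The Schwartz levees: bounded continuous functions of the form `g ∘ P_V` with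
`V ⊆ X` a finite dimensional subspace and `g` a Schwartz function on `V`. -/
def schwartzLevees (X : Type*) [NormedAddCommGroup X] [InnerProductSpace ℝ X] :
    Set (X →ᵇ ℂ) :=
  {f | ∃ (V : Submodule ℝ X) (hV : FiniteDimensional ℝ V) (g : SchwartzMap V ℂ),
    ∀ y : X, f y = g (letI := hV; V.orthogonalProjectionOnto y)}

/-- `S_R(X)`: the linear span of the Schwartz levees. -/
def SR (X : Type*) [NormedAddCommGroup X] [InnerProductSpace ℝ X] : Set (X →ᵇ ℂ) :=
  ↑(Submodule.span ℂ (schwartzLevees X))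

/-!
Products of levees are levees: on `U = V ⊔ W` the map `u ↦ (P_V u, P_W u)` is injective, hence
antilipschitz, so it pulls the Schwartz function `(v, w) ↦ a v * b w` on `V × W` back to a
Schwartz function `c` on `U` with `a (P_V z) * b (P_W z) = c (P_U z)`. Hence `S_R` is an
algebra. The derivative of a levee `a ∘ P_V` in direction `v` is again a levee, namely
`(∂_{P_V v} a) ∘ P_V`, so `S_R` is stable under partial derivatives, and the Poisson bracket is
a sum of products of partial derivatives.
-/

open scoped SchwartzMap LineDeriv

section

variable {𝕜 D E F : Type*} [NontriviallyNormedField 𝕜]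
  [NormedAddCommGroup D] [NormedSpace 𝕜 D] [NormedAddCommGroup E] [NormedSpace 𝕜 E]
  [NormedAddCommGroup F] [NormedSpace 𝕜 F]

theorem ContinuousLinearMap.norm_iteratedFDeriv_comp_right_le (L : D →L[𝕜] E) {f : E → F}
    {n : WithTop ℕ∞} (hf : ContDiff 𝕜 n f) (x : D) {i : ℕ} (hi : i ≤ n) :
    ‖iteratedFDeriv 𝕜 i (f ∘ L) x‖ ≤ ‖iteratedFDeriv 𝕜 i f (L x)‖ * ‖L‖ ^ i := by
  rw [L.iteratedFDeriv_comp_right hf x hi]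
  simpa using (iteratedFDeriv 𝕜 i f (L x)).norm_compContinuousLinearMap_le fun _ ↦ L

theorem norm_iteratedFDeriv_comp_fst_le {f : D → F} {n : WithTop ℕ∞} (hf : ContDiff 𝕜 n f)
    (x : D × E) {i : ℕ} (hi : i ≤ n) :
    ‖iteratedFDeriv 𝕜 i (f ∘ Prod.fst) x‖ ≤ ‖iteratedFDeriv 𝕜 i f x.1‖ :=
  ((ContinuousLinearMap.fst 𝕜 D E).norm_iteratedFDeriv_comp_right_le hf x hi).trans <|
    mul_le_of_le_one_right (norm_nonneg _) <|
      pow_le_one₀ (norm_nonneg _) (ContinuousLinearMap.norm_fst_le 𝕜 D E)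

theorem norm_iteratedFDeriv_comp_snd_le {f : E → F} {n : WithTop ℕ∞} (hf : ContDiff 𝕜 n f)
    (x : D × E) {i : ℕ} (hi : i ≤ n) :
    ‖iteratedFDeriv 𝕜 i (f ∘ Prod.snd) x‖ ≤ ‖iteratedFDeriv 𝕜 i f x.2‖ :=
  ((ContinuousLinearMap.snd 𝕜 D E).norm_iteratedFDeriv_comp_right_le hf x hi).trans <|
    mul_le_of_le_one_right (norm_nonneg _) <|
      pow_le_one₀ (norm_nonneg _) (ContinuousLinearMap.norm_snd_le 𝕜 D E)

end

theorem Prod.norm_pow_le_add_pow {D E : Type*} [SeminormedAddCommGroup D]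
    [SeminormedAddCommGroup E] (k : ℕ) (x : D × E) : ‖x‖ ^ k ≤ ‖x.1‖ ^ k + ‖x.2‖ ^ k := by
  rcases le_total ‖x.1‖ ‖x.2‖ with h | h
  · rw [Prod.norm_def, max_eq_right h]
    exact le_add_of_nonneg_left (by positivity)
  · rw [Prod.norm_def, max_eq_left h]
    exact le_add_of_nonneg_right (by positivity)

namespace SchwartzMap

variable {V W A : Type*} [NormedAddCommGroup V] [NormedSpace ℝ V]
  [NormedAddCommGroup W] [NormedSpace ℝ W] [NormedRing A] [NormedAlgebra ℝ A]

def tensor (a : 𝓢(V, A)) (b : 𝓢(W, A)) : 𝓢(V × W, A) where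
  toFun x := a x.1 * b x.2
  smooth' := ((a.smooth ⊤).comp contDiff_fst).mul ((b.smooth ⊤).comp contDiff_snd)
  decay' k m := by
    refine ⟨∑ i ∈ Finset.range (m + 1), m.choose i *
      (SchwartzMap.seminorm ℝ k i a * SchwartzMap.seminorm ℝ 0 (m - i) b +
        SchwartzMap.seminorm ℝ 0 i a * SchwartzMap.seminorm ℝ k (m - i) b), fun x ↦ ?_⟩
    have hmul := norm_iteratedFDeriv_mul_le ((a.smooth ⊤).comp contDiff_fst)
      ((b.smooth ⊤).comp contDiff_snd) x (n := m) (mod_cast le_top)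
    calc ‖x‖ ^ k * ‖iteratedFDeriv ℝ m (fun x : V × W ↦ a x.1 * b x.2) x‖
        ≤ (‖x.1‖ ^ k + ‖x.2‖ ^ k) * ∑ i ∈ Finset.range (m + 1), m.choose i *
            ‖iteratedFDeriv ℝ i a x.1‖ * ‖iteratedFDeriv ℝ (m - i) b x.2‖ := by
          refine mul_le_mul (Prod.norm_pow_le_add_pow k x) (hmul.trans ?_) (by positivity)
            (by positivity)
          gcongr with i
          · exact norm_iteratedFDeriv_comp_fst_le (a.smooth ⊤) x (WithTop.coe_le_coe.2 le_top)
          · exact norm_iteratedFDeriv_comp_snd_le (b.smooth ⊤) x (WithTop.coe_le_coe.2 le_top)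
      _ = ∑ i ∈ Finset.range (m + 1), m.choose i *
            (‖x.1‖ ^ k * ‖iteratedFDeriv ℝ i a x.1‖ * ‖iteratedFDeriv ℝ (m - i) b x.2‖ +
              ‖iteratedFDeriv ℝ i a x.1‖ * (‖x.2‖ ^ k * ‖iteratedFDeriv ℝ (m - i) b x.2‖)) := by
          rw [Finset.mul_sum]
          exact Finset.sum_congr rfl fun _ _ ↦ by ring
      _ ≤ _ := by
          gcongr with i
          · exact le_seminorm ℝ k i a x.1
          · exact norm_iteratedFDeriv_le_seminorm ℝ b (m - i) x.2
          · exact norm_iteratedFDeriv_le_seminorm ℝ a i x.1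
          · exact le_seminorm ℝ k (m - i) b x.2

@[simp]
theorem tensor_apply (a : 𝓢(V, A)) (b : 𝓢(W, A)) (x : V × W) : tensor a b x = a x.1 * b x.2 :=
  rfl

end SchwartzMap

namespace Submodule

variable {X : Type*} [NormedAddCommGroup X] [InnerProductSpace ℝ X]

theorem injective_orthogonalProjectionOnto_prod_comp_subtypeL_sup (V W : Submodule ℝ X)
    [V.HasOrthogonalProjection] [W.HasOrthogonalProjection] :
    Function.Injective
      ((V.orthogonalProjectionOnto.prod W.orthogonalProjectionOnto).comp (V ⊔ W).subtypeL) := by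
  refine (injective_iff_map_eq_zero _).2 fun u hu ↦ ?_
  simp only [ContinuousLinearMap.coe_comp, Function.comp_apply, ContinuousLinearMap.prod_apply,
    Prod.mk_eq_zero, orthogonalProjectionOnto_eq_zero_iff] at hu
  have hu' : (u : X) ∈ (V ⊔ W) ⊓ (V ⊔ W)ᗮ := ⟨u.2, inf_orthogonal V W ▸ hu⟩
  rw [inf_orthogonal_eq_bot, mem_bot] at hu'
  exact Subtype.ext hu'

theorem exists_schwartzMap_sup_eq_mul (V W : Submodule ℝ X) [FiniteDimensional ℝ V]
    [FiniteDimensional ℝ W] (a : 𝓢(V, ℂ)) (b : 𝓢(W, ℂ)) :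
    ∃ c : 𝓢((V ⊔ W : Submodule ℝ X), ℂ), ∀ z : X,
      c ((V ⊔ W).orthogonalProjectionOnto z) =
        a (V.orthogonalProjectionOnto z) * b (W.orthogonalProjectionOnto z) := by
  set G := (V.orthogonalProjectionOnto.prod W.orthogonalProjectionOnto).comp (V ⊔ W).subtypeL
  obtain ⟨K, -, hK⟩ := (G : (V ⊔ W : Submodule ℝ X) →ₗ[ℝ] V × W).exists_antilipschitzWith
    (LinearMap.ker_eq_bot.2 (injective_orthogonalProjectionOnto_prod_comp_subtypeL_sup V W))
  refine ⟨SchwartzMap.compCLMOfAntilipschitz ℝ G.hasTemperateGrowth hK (a.tensor b), fun z ↦ ?_⟩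
  simp [G, orthogonalProjectionOnto_starProjection_of_le (le_sup_left : V ≤ V ⊔ W),
    orthogonalProjectionOnto_starProjection_of_le (le_sup_right : W ≤ V ⊔ W)]

end Submodule

variable {X : Type*} [NormedAddCommGroup X] [InnerProductSpace ℝ X]

def levee (V : Submodule ℝ X) [FiniteDimensional ℝ V] (g : 𝓢(V, ℂ)) : X →ᵇ ℂ :=
  g.toBoundedContinuousFunction.compContinuous V.orthogonalProjectionOnto

@[simp]
theorem levee_apply (V : Submodule ℝ X) [FiniteDimensional ℝ V] (g : 𝓢(V, ℂ)) (z : X) :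
    levee V g z = g (V.orthogonalProjectionOnto z) :=
  rfl

theorem levee_mem_schwartzLevees (V : Submodule ℝ X) [FiniteDimensional ℝ V] (g : 𝓢(V, ℂ)) :
    levee V g ∈ schwartzLevees X :=
  ⟨V, inferInstance, g, fun _ ↦ rfl⟩

theorem exists_eq_levee_of_mem_schwartzLevees {f : X →ᵇ ℂ} (hf : f ∈ schwartzLevees X) :
    ∃ (V : Submodule ℝ X) (_ : FiniteDimensional ℝ V) (g : 𝓢(V, ℂ)), f = levee V g := by
  obtain ⟨V, hV, g, hfg⟩ := hf
  exact ⟨V, hV, g, BoundedContinuousFunction.ext hfg⟩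

theorem mul_mem_schwartzLevees {f g : X →ᵇ ℂ} (hf : f ∈ schwartzLevees X)
    (hg : g ∈ schwartzLevees X) : f * g ∈ schwartzLevees X := by
  obtain ⟨V, _, a, rfl⟩ := exists_eq_levee_of_mem_schwartzLevees hf
  obtain ⟨W, _, b, rfl⟩ := exists_eq_levee_of_mem_schwartzLevees hg
  obtain ⟨c, hc⟩ := V.exists_schwartzMap_sup_eq_mul W a b
  exact ⟨V ⊔ W, inferInstance, c, fun z ↦ by simp [hc]⟩

theorem mul_mem_SR {f g : X →ᵇ ℂ} (hf : f ∈ SR X) (hg : g ∈ SR X) : f * g ∈ SR X := by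
  have hmul : Submodule.span ℂ (schwartzLevees X) * Submodule.span ℂ (schwartzLevees X) ≤
      Submodule.span ℂ (schwartzLevees X) := by
    rw [Submodule.span_mul_span]
    exact Submodule.span_mono <| Set.mul_subset_iff.2 fun _ hf _ hg ↦ mul_mem_schwartzLevees hf hg
  exact hmul (Submodule.mul_mem_mul hf hg)

theorem fderiv_levee_apply (V : Submodule ℝ X) [FiniteDimensional ℝ V] (g : 𝓢(V, ℂ))
    (z v : X) : fderiv ℝ (levee V g) z v = levee V (∂_{V.orthogonalProjectionOnto v} g) z := by
  have hg := (g.hasFDerivAt (V.orthogonalProjectionOnto z)).comp z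
    V.orthogonalProjectionOnto.hasFDerivAt
  rw [show ⇑(levee V g) = g ∘ V.orthogonalProjectionOnto from rfl, hg.fderiv]
  rfl

theorem differentiable_of_mem_SR {f : X →ᵇ ℂ} (hf : f ∈ SR X) : Differentiable ℝ f := by
  induction hf using Submodule.span_induction with
  | mem f hf =>
    obtain ⟨V, _, g, rfl⟩ := exists_eq_levee_of_mem_schwartzLevees hf
    exact g.differentiable.comp V.orthogonalProjectionOnto.differentiable
  | zero => exact differentiable_const 0
  | add f g _ _ hf hg => exact hf.add hg
  | smul c f _ hf => exact hf.const_smul c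

theorem exists_fderiv_apply_mem_SR {f : X →ᵇ ℂ} (hf : f ∈ SR X) (v : X) :
    ∃ Df ∈ SR X, ∀ z, Df z = fderiv ℝ f z v := by
  induction hf using Submodule.span_induction with
  | mem f hf =>
    obtain ⟨V, _, g, rfl⟩ := exists_eq_levee_of_mem_schwartzLevees hf
    exact ⟨_, Submodule.subset_span (levee_mem_schwartzLevees V _),
      fun z ↦ (fderiv_levee_apply V g z v).symm⟩
  | zero => exact ⟨0, Submodule.zero_mem _, fun z ↦ by simp⟩
  | add f g hf hg hDf hDg =>
    obtain ⟨Df, hDf_mem, hDf⟩ := hDf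
    obtain ⟨Dg, hDg_mem, hDg⟩ := hDg
    refine ⟨Df + Dg, Submodule.add_mem _ hDf_mem hDg_mem, fun z ↦ ?_⟩
    simp [fderiv_add (differentiable_of_mem_SR hf z) (differentiable_of_mem_SR hg z), hDf, hDg]
  | smul c f hf hDf =>
    obtain ⟨Df, hDf_mem, hDf⟩ := hDf
    refine ⟨c • Df, Submodule.smul_mem _ c hDf_mem, fun z ↦ ?_⟩
    rw [BoundedContinuousFunction.coe_smul c f,
      fderiv_fun_const_smul (differentiable_of_mem_SR hf z) c]
    simp [hDf]

/-- `S_R(ℝ^{2n})` is closed under the canonical Poisson bracket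
`{f, g}(z) = Σ_{j=1}^n (∂_j f(z) · ∂_{n+j} g(z) − ∂_{n+j} f(z) · ∂_j g(z))`. -/
theorem poissonBracket_mem_SR (n : ℕ)
    (f g F : EuclideanSpace ℝ (Fin (2 * n)) →ᵇ ℂ)
    (hf : f ∈ SR (EuclideanSpace ℝ (Fin (2 * n))))
    (hg : g ∈ SR (EuclideanSpace ℝ (Fin (2 * n))))
    (hF : ∀ z, F z = ∑ j : Fin n,
      (fderiv ℝ (⇑f) z (EuclideanSpace.single (Fin.cast (by omega) (Fin.castAdd n j)) (1 : ℝ)) *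
        fderiv ℝ (⇑g) z (EuclideanSpace.single (Fin.cast (by omega) (Fin.natAdd n j)) (1 : ℝ)) -
       fderiv ℝ (⇑f) z (EuclideanSpace.single (Fin.cast (by omega) (Fin.natAdd n j)) (1 : ℝ)) *
        fderiv ℝ (⇑g) z (EuclideanSpace.single (Fin.cast (by omega) (Fin.castAdd n j)) (1 : ℝ)))) :
    F ∈ SR (EuclideanSpace ℝ (Fin (2 * n))) := by
  choose Df hDf_mem hDf using exists_fderiv_apply_mem_SR hf
  choose Dg hDg_mem hDg using exists_fderiv_apply_mem_SR hg
  set q : Fin n → Fin (2 * n) := fun j ↦ Fin.cast (by omega) (Fin.castAdd n j)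
  set p : Fin n → Fin (2 * n) := fun j ↦ Fin.cast (by omega) (Fin.natAdd n j)
  have hF_eq : F = ∑ j : Fin n,
      (Df (EuclideanSpace.single (q j) 1) * Dg (EuclideanSpace.single (p j) 1) -
        Df (EuclideanSpace.single (p j) 1) * Dg (EuclideanSpace.single (q j) 1)) := by
    ext z
    simp [hF, hDf, hDg, q, p]
  rw [hF_eq]
  exact Submodule.sum_mem _ fun j _ ↦
    Submodule.sub_mem _ (mul_mem_SR (hDf_mem _) (hDg_mem _)) (mul_mem_SR (hDf_mem _) (hDg_mem _))
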